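/- Let L(f) = E_{g~D}[max(||f - g||_2 - m, 0)] where D has finite first moment and is not supported in any ball of radius m. If D is absolutely continuous with respect to Lebesgue measure on R^d (d ≥ 2), then L is strictly convex on R^d and hence has a unique global minimizer f̂. -/

import Mathlib

open MeasureTheory Filter Set

/-!
For `g` off the line through `x ≠ y`, the triangle inequality
`‖a • (x - g) + b • (y - g)‖ ≤ a * ‖x - g‖ + b * ‖y - g‖` is strict in a strictly convex space,
and the hinge `t ↦ max (t - m) 0` keeps it strict as long as `g` lies outside the closed ball of
radius `m` about `x`. The line is Lebesgue-null and `μ` charges the complement of every such ball,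
so the Jensen gap of the expected hinge loss has positive integral. Being convex in finite
dimension, the loss is continuous, and `L f ≥ ‖f‖ - ∫ ‖g‖ - m` makes it coercive; hence a
minimizer exists, and it is unique by strict convexity.
-/

section Geometry

variable {E : Type*} [NormedAddCommGroup E] [NormedSpace ℝ E]

lemma mem_affineSpan_pair_of_sameRay_sub {x y g : E} (hxy : x ≠ y)
    (h : SameRay ℝ (x - g) (y - g)) : g ∈ affineSpan ℝ {x, y} := by
  obtain ⟨u, a, b, -, -, -, hx, hy⟩ := h.exists_eq_smul
  have hcol : Collinear ℝ {g, x, y} := by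
    refine (collinear_iff_of_mem (mem_insert g _)).2 ⟨u, ?_⟩
    rintro p (rfl | rfl | rfl)
    · exact ⟨0, by simp⟩
    · exact ⟨a, by rw [← hx, vadd_eq_add, sub_add_cancel]⟩
    · exact ⟨b, by rw [← hy, vadd_eq_add, sub_add_cancel]⟩
  exact hcol.mem_affineSpan_of_mem_of_ne (by simp) (by simp) (by simp) hxy

lemma norm_smul_add_smul_sub_lt [StrictConvexSpace ℝ E] {x y g : E} (hxy : x ≠ y)
    (hg : g ∉ affineSpan ℝ {x, y}) {a b : ℝ} (ha : 0 < a) (hb : 0 < b) (hab : a + b = 1) :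
    ‖a • x + b • y - g‖ < a * ‖x - g‖ + b * ‖y - g‖ := by
  have hsplit : a • x + b • y - g = a • (x - g) + b • (y - g) := by
    linear_combination (norm := module) hab • g
  have hray : ¬ SameRay ℝ (a • (x - g)) (b • (y - g)) := fun h =>
    hg <| mem_affineSpan_pair_of_sameRay_sub hxy <| by
      simpa [smul_smul, ha.ne', hb.ne'] using
        (h.pos_smul_left (inv_pos.2 ha)).pos_smul_right (inv_pos.2 hb)
  rw [hsplit]
  refine (norm_add_lt_of_not_sameRay hray).trans_eq ?_
  rw [norm_smul, norm_smul, Real.norm_of_nonneg ha.le, Real.norm_of_nonneg hb.le]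

lemma affineSpan_pair_ne_top [FiniteDimensional ℝ E] (hE : 2 ≤ Module.finrank ℝ E) (x y : E) :
    affineSpan ℝ {x, y} ≠ ⊤ := by
  intro htop
  have h := (collinear_pair ℝ x y).finrank_le_one
  rw [← direction_affineSpan, htop, AffineSubspace.direction_top, finrank_top] at h
  omega

end Geometry

lemma convexOn_hinge {E : Type*} [NormedAddCommGroup E] [NormedSpace ℝ E] (m : ℝ) (g : E) :
    ConvexOn ℝ univ (fun f => max (‖f - g‖ - m) 0) := by
  refine (((convexOn_dist g convex_univ).add_const (-m)).sup
    (convexOn_const 0 convex_univ)).congr fun f _ => ?_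
  simp [dist_eq_norm, sub_eq_add_neg]

lemma max_sub_zero_lt_mul_add_mul {m s u v a b : ℝ} (hs : s < a * u + b * v)
    (huv : m < u ∨ m < v) (ha : 0 < a) (hb : 0 < b) (hab : a + b = 1) :
    max (s - m) 0 < a * max (u - m) 0 + b * max (v - m) 0 := by
  have hu := le_max_left (u - m) 0
  have hv := le_max_left (v - m) 0
  have hpos : 0 < a * max (u - m) 0 + b * max (v - m) 0 := by
    rcases huv with h | h
    · exact add_pos_of_pos_of_nonneg (mul_pos ha (lt_max_of_lt_left (by linarith)))
        (mul_nonneg hb.le (le_max_right _ _))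
    · exact add_pos_of_nonneg_of_pos (mul_nonneg ha.le (le_max_right _ _))
        (mul_pos hb (lt_max_of_lt_left (by linarith)))
  refine max_lt ?_ hpos
  have hm : a * m + b * m = m := by rw [← add_mul, hab, one_mul]
  linarith [mul_le_mul_of_nonneg_left hu ha.le, mul_le_mul_of_nonneg_left hv hb.le]

lemma strictConvexOn_integral {E α : Type*} [AddCommGroup E] [Module ℝ E] [MeasurableSpace α]
    {μ : Measure α} {s : Set E} {F : E → α → ℝ} (hs : Convex ℝ s)
    (hint : ∀ x ∈ s, Integrable (F x) μ) (hconv : ∀ᵐ g ∂μ, ConvexOn ℝ s (F · g))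
    (hstrict : ∀ x ∈ s, ∀ y ∈ s, x ≠ y → ∀ a b : ℝ, 0 < a → 0 < b → a + b = 1 →
      ∃ᵐ g ∂μ, F (a • x + b • y) g < a * F x g + b * F y g) :
    StrictConvexOn ℝ s (fun x => ∫ g, F x g ∂μ) := by
  refine ⟨hs, fun x hx y hy hxy a b ha hb hab => ?_⟩
  have hA : Integrable (fun g => a * F x g) μ := (hint x hx).const_mul a
  have hB : Integrable (fun g => b * F y g) μ := (hint y hy).const_mul b
  have hC : Integrable (F (a • x + b • y)) μ := hint _ (hs hx hy ha.le hb.le hab)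
  have hAB : Integrable (fun g => a * F x g + b * F y g) μ := hA.add hB
  let gap := fun g => a * F x g + b * F y g - F (a • x + b • y) g
  have hgap_nonneg : 0 ≤ᵐ[μ] gap := hconv.mono fun g hg =>
    sub_nonneg.2 (hg.2 hx hy ha.le hb.le hab)
  have hgap_pos : 0 < ∫ g, gap g ∂μ := by
    refine (integral_nonneg_of_ae hgap_nonneg).lt_of_ne fun h0 => ?_
    obtain ⟨g, hlt, hzero⟩ := ((hstrict x hx y hy hxy a b ha hb hab).and_eventually
      ((integral_eq_zero_iff_of_nonneg_ae hgap_nonneg (hAB.sub hC)).1 h0.symm)).exists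
    simp only [gap, Pi.zero_apply, sub_eq_zero] at hzero
    exact hlt.ne' hzero
  rw [integral_sub hAB hC, integral_add hA hB, integral_const_mul,
    integral_const_mul] at hgap_pos
  simp only [smul_eq_mul]
  linarith

section HingeLoss

variable {E : Type*} [NormedAddCommGroup E] [MeasurableSpace E]

noncomputable def expectedHingeLoss (μ : Measure E) (m : ℝ) (f : E) : ℝ :=
  ∫ g, max (‖f - g‖ - m) 0 ∂μ

variable [OpensMeasurableSpace E] {μ : Measure E}

lemma integrable_hinge [IsFiniteMeasure μ] (hmom : Integrable (fun g => ‖g‖) μ) (m : ℝ) (f : E) :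
    Integrable (fun g => max (‖f - g‖ - m) 0) μ := by
  have hdist : Integrable (fun g => ‖f - g‖) μ :=
    ((integrable_const ‖f‖).add hmom).mono'
      (continuous_const.sub continuous_id).norm.aestronglyMeasurable
      (ae_of_all _ fun g => by simpa using norm_sub_le f g)
  exact (hdist.sub (integrable_const m)).pos_part

lemma norm_sub_le_expectedHingeLoss [IsProbabilityMeasure μ]
    (hmom : Integrable (fun g => ‖g‖) μ) (m : ℝ) (f : E) :
    ‖f‖ - ∫ g, ‖g‖ ∂μ - m ≤ expectedHingeLoss μ m f := by
  have hdiff : Integrable (fun g => ‖f‖ - ‖g‖) μ := (integrable_const _).sub hmom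
  have hlow : ∫ g, (‖f‖ - ‖g‖ - m) ∂μ ≤ expectedHingeLoss μ m f :=
    integral_mono (hdiff.sub (integrable_const _)) (integrable_hinge hmom m f) fun g =>
      (sub_le_sub_right (norm_sub_norm_le f g) m).trans (le_max_left _ _)
  rwa [integral_sub hdiff (integrable_const _),
    integral_sub (integrable_const _) hmom, integral_const, integral_const, probReal_univ,
    one_smul, one_smul] at hlow

lemma tendsto_expectedHingeLoss_cocompact [ProperSpace E] [IsProbabilityMeasure μ]
    (hmom : Integrable (fun g => ‖g‖) μ) (m : ℝ) :
    Tendsto (expectedHingeLoss μ m) (Filter.cocompact E) atTop := by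
  refine tendsto_atTop_mono (norm_sub_le_expectedHingeLoss hmom m) ?_
  convert tendsto_atTop_add_const_right _ (-(∫ g, ‖g‖ ∂μ) - m)
    (tendsto_norm_cocompact_atTop (E := E)) using 2
  ring

end HingeLoss

section StrictConvexity

variable {E : Type*} [NormedAddCommGroup E] [NormedSpace ℝ E] [StrictConvexSpace ℝ E]
  [FiniteDimensional ℝ E] [MeasurableSpace E] [BorelSpace E] {μ ν : Measure E}
  [ν.IsAddHaarMeasure] {m : ℝ}

lemma frequently_hinge_lt (hE : 2 ≤ Module.finrank ℝ E) (hac : μ ≪ ν)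
    (hball : ¬ ∃ p : E, ∀ᵐ g ∂μ, g ∈ Metric.closedBall p m) {x y : E} (hxy : x ≠ y)
    {a b : ℝ} (ha : 0 < a) (hb : 0 < b) (hab : a + b = 1) :
    ∃ᵐ g ∂μ, max (‖a • x + b • y - g‖ - m) 0
      < a * max (‖x - g‖ - m) 0 + b * max (‖y - g‖ - m) 0 := by
  have hline : ∀ᵐ g ∂μ, g ∉ affineSpan ℝ {x, y} := measure_eq_zero_iff_ae_notMem.1 <|
    hac (Measure.addHaar_affineSubspace ν _ (affineSpan_pair_ne_top hE x y))
  have hfar : ∃ᵐ g ∂μ, m < ‖x - g‖ := by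
    simpa [not_eventually, dist_comm, dist_eq_norm] using fun h => hball ⟨x, h⟩
  exact (hfar.and_eventually hline).mono fun g ⟨hm, hg⟩ => max_sub_zero_lt_mul_add_mul
    (norm_smul_add_smul_sub_lt hxy hg ha hb hab) (Or.inl hm) ha hb hab

lemma strictConvexOn_expectedHingeLoss [IsFiniteMeasure μ] (hE : 2 ≤ Module.finrank ℝ E)
    (hmom : Integrable (fun g => ‖g‖) μ) (hac : μ ≪ ν)
    (hball : ¬ ∃ p : E, ∀ᵐ g ∂μ, g ∈ Metric.closedBall p m) :
    StrictConvexOn ℝ univ (expectedHingeLoss μ m) :=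
  strictConvexOn_integral convex_univ (fun f _ => integrable_hinge hmom m f)
    (ae_of_all _ (convexOn_hinge m))
    fun _ _ _ _ hxy _ _ ha hb hab => frequently_hinge_lt hE hac hball hxy ha hb hab

end StrictConvexity

theorem hinge_loss_strictly_convex_unique_min_general
    {d : ℕ} (hd : 2 ≤ d)
    (μ : Measure (EuclideanSpace ℝ (Fin d))) [IsProbabilityMeasure μ]
    (hmom : Integrable (fun g => ‖g‖) μ)
    (m : ℝ)
    (hac : μ ≪ (volume : Measure (EuclideanSpace ℝ (Fin d))))
    (hball : ¬ ∃ p : EuclideanSpace ℝ (Fin d), ∀ᵐ g ∂μ, g ∈ Metric.closedBall p m) :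
    StrictConvexOn ℝ Set.univ
        (fun f : EuclideanSpace ℝ (Fin d) => ∫ g, max (‖f - g‖ - m) 0 ∂μ) ∧
    ∃! fhat : EuclideanSpace ℝ (Fin d), ∀ f : EuclideanSpace ℝ (Fin d),
      (∫ g, max (‖fhat - g‖ - m) 0 ∂μ) ≤ ∫ g, max (‖f - g‖ - m) 0 ∂μ := by
  have hconv : StrictConvexOn ℝ univ (expectedHingeLoss μ m) :=
    strictConvexOn_expectedHingeLoss (by rwa [finrank_euclideanSpace_fin]) hmom hac hball
  have hcont : Continuous (expectedHingeLoss μ m) :=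
    continuousOn_univ.1 (hconv.convexOn.continuousOn isOpen_univ)
  obtain ⟨fhat, hmin⟩ := hcont.exists_forall_le (tendsto_expectedHingeLoss_cocompact hmom m)
  exact ⟨hconv, fhat, hmin, fun f hf =>
    hconv.eq_of_isMinOn (fun z _ => hf z) (fun z _ => hmin z) trivial trivial⟩

/-- If `D` is absolutely continuous on `ℝ^d` (`d ≥ 2`), has finite first moment, and is
not supported in any closed ball of radius `m`, then the expected hinge loss
`L(f) = E_{g~D}[max(‖f - g‖₂ - m, 0)]` is strictly convex and has a unique global
minimizer `f̂`. -/
theorem hinge_loss_strictly_convex_unique_min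
    {d : ℕ} (hd : 2 ≤ d)
    (μ : Measure (EuclideanSpace ℝ (Fin d))) [IsProbabilityMeasure μ]
    (hmom : Integrable (fun g => ‖g‖) μ)
    (m : ℝ) (hm : 0 ≤ m)
    (hac : μ ≪ (volume : Measure (EuclideanSpace ℝ (Fin d))))
    (hball : ¬ ∃ p : EuclideanSpace ℝ (Fin d), ∀ᵐ g ∂μ, g ∈ Metric.closedBall p m) :
    StrictConvexOn ℝ Set.univ
        (fun f : EuclideanSpace ℝ (Fin d) => ∫ g, max (‖f - g‖ - m) 0 ∂μ) ∧
    ∃! fhat : EuclideanSpace ℝ (Fin d), ∀ f : EuclideanSpace ℝ (Fin d),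
      (∫ g, max (‖fhat - g‖ - m) 0 ∂μ) ≤ ∫ g, max (‖f - g‖ - m) 0 ∂μ :=
  hinge_loss_strictly_convex_unique_min_general hd μ hmom m hac hball
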